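/- If both gcd(r−1,n) and m are even, then Λ(n,m;r) has exactly three subgroups of index 2, namely ⟨α², β⟩, ⟨α, β²⟩ and ⟨α², αβ⟩. -/

import Mathlib

/-!
Every index-two subgroup `H` is determined by which of the generators `α`, `β` it contains, and
it contains `α²`, `β²` and, when it misses both generators, `αβ`; so `H` contains one of the three
listed subgroups, and it suffices that each of those has index two. Since `αβα⁻¹ = α¹⁻ʳβ` with
`1 - r` even, each of them, say `K`, is normalised by a generator `x ∉ K` with `x² ∈ K` (`x = β` for
`⟨α, β²⟩`, `x = α` otherwise), and both generators lie in `K ∪ x⁻¹K`; hence so does the whole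
group and `K` has index two. That `x ∉ K` is witnessed by a character `Λ(n,m;r) → {±1}`: as `n`
and `m` are even and `r` is odd, any choice of signs for `α` and `β` respects the relations.
-/

/-- Relations of the metacyclic group Λ(n,m;r) = ⟨α,β | αⁿ = βᵐ = 1, βαβ⁻¹ = αʳ⟩. -/
def metacyclicRels (n m r : ℕ) : Set (FreeGroup (Fin 2)) :=
  { FreeGroup.of 0 ^ n, FreeGroup.of 1 ^ m,
    FreeGroup.of 1 * FreeGroup.of 0 * (FreeGroup.of 1)⁻¹ * (FreeGroup.of 0 ^ r)⁻¹ }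

/-- The split metacyclic group Λ(n,m;r). -/
abbrev Lam (n m r : ℕ) := PresentedGroup (metacyclicRels n m r)

def lamAlpha (n m r : ℕ) : Lam n m r := PresentedGroup.of 0
def lamBeta (n m r : ℕ) : Lam n m r := PresentedGroup.of 1

open Subgroup

namespace Subgroup

variable {G : Type*} [Group G]

theorem conj_mem_closure_of_forall_mem (x : G) {S : Set G}
    (hS : ∀ s ∈ S, x * s * x⁻¹ ∈ closure S) {k : G} (hk : k ∈ closure S) :
    x * k * x⁻¹ ∈ closure S :=
  (closure_le ((closure S).comap (MulAut.conj x).toMonoidHom)).2 hS hk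

theorem mul_mem_or_mem_of_mem_closure {K : Subgroup G} {x : G} {S : Set G}
    (hx2 : x ^ 2 ∈ K) (hconj : ∀ k ∈ K, x * k * x⁻¹ ∈ K)
    (hS : ∀ s ∈ S, x * s ∈ K ∨ s ∈ K) {g : G} (hg : g ∈ closure S) :
    x * g ∈ K ∨ g ∈ K := by
  induction hg using closure_induction with
  | mem s hs => exact hS s hs
  | one => exact Or.inr K.one_mem
  | mul a b _ _ iha ihb =>
    rcases iha with ha | ha <;> rcases ihb with hb | hb
    · right
      have e : a * b = (x ^ 2)⁻¹ * (x * (x * a) * x⁻¹) * (x * b) := by group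
      rw [e]
      exact K.mul_mem (K.mul_mem (K.inv_mem hx2) (hconj _ ha)) hb
    · exact Or.inl (mul_assoc x a b ▸ K.mul_mem ha hb)
    · left
      have e : x * (a * b) = x * a * x⁻¹ * (x * b) := by group
      rw [e]
      exact K.mul_mem (hconj a ha) hb
    · exact Or.inr (K.mul_mem ha hb)
  | inv a _ iha =>
    rcases iha with ha | ha
    · left
      have e : x * a⁻¹ = x * (x * a)⁻¹ * x⁻¹ * x ^ 2 := by group
      rw [e]
      exact K.mul_mem (hconj _ (K.inv_mem ha)) hx2
    · exact Or.inr (K.inv_mem ha)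

theorem index_closure_eq_two {S T : Set G} {x : G} (hS : closure S = ⊤)
    (hx2 : x ^ 2 ∈ closure T) (hconj : ∀ t ∈ T, x * t * x⁻¹ ∈ closure T)
    (hcover : ∀ s ∈ S, x * s ∈ closure T ∨ s ∈ closure T) (hx : x ∉ closure T) :
    (closure T).index = 2 :=
  index_eq_two_iff_exists_notMem_and'.2 ⟨x, hx, fun g =>
    mul_mem_or_mem_of_mem_closure hx2 (fun _ => conj_mem_closure_of_forall_mem x hconj) hcover
      (hS ▸ mem_top g)⟩

theorem eq_of_le_of_index_eq_two {K H : Subgroup G} (hle : K ≤ H) (hK : K.index = 2)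
    (hH : H.index = 2) : K = H := by
  have h := relIndex_mul_index hle
  rw [hK, hH] at h
  exact le_antisymm hle (relIndex_eq_one.1 (by omega))

end Subgroup

section OddConjugation

variable {G : Type*} [Group G] {a b : G} {t : ℕ}

theorem notMem_of_le_ker {K : Subgroup G} {φ : G →* ℤˣ} (hK : K ≤ φ.ker) {x : G}
    (hx : φ x = -1) : x ∉ K :=
  fun h => absurd (hx ▸ hK h : (-1 : ℤˣ) = 1) (by decide)

theorem mul_mul_inv_eq_of_conj_eq_odd_pow (hba : b * a * b⁻¹ = a ^ (2 * t + 1)) :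
    a * b * a⁻¹ = ((a ^ 2) ^ t)⁻¹ * b := by
  have hinv : b * a⁻¹ = (a ^ (2 * t + 1))⁻¹ * b := by rw [← hba]; group
  calc a * b * a⁻¹ = a * (b * a⁻¹) := by group
    _ = a * (a ^ (2 * t + 1))⁻¹ * b := by rw [hinv]; group
    _ = ((a ^ 2) ^ t)⁻¹ * b := by group

variable (hgen : closure {a, b} = ⊤) (hba : b * a * b⁻¹ = a ^ (2 * t + 1))
  (hlift : ∀ x y : ℤˣ, ∃ φ : G →* ℤˣ, φ a = x ∧ φ b = y)
include hgen hba hlift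

theorem index_closure_sq_left_eq_two : (closure {a ^ 2, b}).index = 2 := by
  have ha2 : a ^ 2 ∈ closure {a ^ 2, b} := subset_closure (Set.mem_insert _ _)
  have hb : b ∈ closure {a ^ 2, b} := subset_closure (Set.mem_insert_of_mem _ rfl)
  obtain ⟨φ, hφa, hφb⟩ := hlift (-1) 1
  refine index_closure_eq_two hgen ha2 ?_ ?_ (notMem_of_le_ker ?_ hφa)
  · rintro s (rfl | rfl)
    · rwa [show a * a ^ 2 * a⁻¹ = a ^ 2 by group]
    · rw [mul_mul_inv_eq_of_conj_eq_odd_pow hba]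
      exact mul_mem (inv_mem (pow_mem ha2 t)) hb
  · rintro s (rfl | rfl)
    · exact Or.inl (by rwa [← pow_two])
    · exact Or.inr hb
  · rw [closure_le]
    rintro s (rfl | rfl)
    · exact φ.mem_ker.2 (by rw [map_pow, Int.units_sq])
    · exact hφb

theorem index_closure_sq_right_eq_two : (closure {a, b ^ 2}).index = 2 := by
  have ha : a ∈ closure {a, b ^ 2} := subset_closure (Set.mem_insert _ _)
  have hb2 : b ^ 2 ∈ closure {a, b ^ 2} := subset_closure (Set.mem_insert_of_mem _ rfl)
  obtain ⟨φ, hφa, hφb⟩ := hlift 1 (-1)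
  refine index_closure_eq_two hgen hb2 ?_ ?_ (notMem_of_le_ker ?_ hφb)
  · rintro s (rfl | rfl)
    · rw [hba]
      exact pow_mem ha _
    · rwa [show b * b ^ 2 * b⁻¹ = b ^ 2 by group]
  · rintro s (rfl | rfl)
    · exact Or.inr ha
    · exact Or.inl (by rwa [← pow_two])
  · rw [closure_le]
    rintro s (rfl | rfl)
    · exact hφa
    · exact φ.mem_ker.2 (by rw [map_pow, Int.units_sq])

theorem index_closure_sq_mul_eq_two : (closure {a ^ 2, a * b}).index = 2 := by
  have ha2 : a ^ 2 ∈ closure {a ^ 2, a * b} := subset_closure (Set.mem_insert _ _)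
  have hab : a * b ∈ closure {a ^ 2, a * b} := subset_closure (Set.mem_insert_of_mem _ rfl)
  obtain ⟨φ, hφa, hφb⟩ := hlift (-1) (-1)
  refine index_closure_eq_two hgen ha2 ?_ ?_ (notMem_of_le_ker ?_ hφa)
  · rintro s (rfl | rfl)
    · rwa [show a * a ^ 2 * a⁻¹ = a ^ 2 by group]
    · rw [show a * (a * b) * a⁻¹ = a * (a * b * a⁻¹) by group,
        mul_mul_inv_eq_of_conj_eq_odd_pow hba,
        show a * (((a ^ 2) ^ t)⁻¹ * b) = ((a ^ 2) ^ t)⁻¹ * (a * b) by group]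
      exact mul_mem (inv_mem (pow_mem ha2 t)) hab
  · rintro s (rfl | rfl)
    · exact Or.inl (by rwa [← pow_two])
    · exact Or.inl hab
  · rw [closure_le]
    rintro s (rfl | rfl)
    · exact φ.mem_ker.2 (by rw [map_pow, Int.units_sq])
    · exact φ.mem_ker.2 (by rw [map_mul, hφa, hφb]; decide)

theorem setOf_index_eq_two_eq :
    {H : Subgroup G | H.index = 2} =
      {closure {a ^ 2, b}, closure {a, b ^ 2}, closure {a ^ 2, a * b}} := by
  have hK₁ := index_closure_sq_left_eq_two hgen hba hlift
  have hK₂ := index_closure_sq_right_eq_two hgen hba hlift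
  have hK₃ := index_closure_sq_mul_eq_two hgen hba hlift
  ext H
  simp only [Set.mem_ofPred_eq, Set.mem_insert_iff, Set.mem_singleton_iff]
  refine ⟨fun hH => ?_, by rintro (rfl | rfl | rfl) <;> assumption⟩
  have hle {s₁ s₂ : G} (h₁ : s₁ ∈ H) (h₂ : s₂ ∈ H) : closure {s₁, s₂} ≤ H := by
    rw [closure_le]
    rintro s (rfl | rfl) <;> assumption
  by_cases ha : a ∈ H <;> by_cases hb : b ∈ H
  · have htop : H = ⊤ := top_le_iff.1 (hgen ▸ hle ha hb)
    simp [htop] at hH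
  · exact Or.inr (Or.inl
      (eq_of_le_of_index_eq_two (hle ha (sq_mem_of_index_two hH b)) hK₂ hH).symm)
  · exact Or.inl (eq_of_le_of_index_eq_two (hle (sq_mem_of_index_two hH a) hb) hK₁ hH).symm
  · have hab : a * b ∈ H := (mul_mem_iff_of_index_two hH).2 (iff_of_false ha hb)
    exact Or.inr (Or.inr
      (eq_of_le_of_index_eq_two (hle (sq_mem_of_index_two hH a) hab) hK₃ hH).symm)

end OddConjugation

section Lam

variable {n m r : ℕ}

theorem lamBeta_mul_lamAlpha_mul_inv :
    lamBeta n m r * lamAlpha n m r * (lamBeta n m r)⁻¹ = lamAlpha n m r ^ r := by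
  have h : PresentedGroup.mk (metacyclicRels n m r)
      (FreeGroup.of 1 * FreeGroup.of 0 * (FreeGroup.of 1)⁻¹ * (FreeGroup.of 0 ^ r)⁻¹) = 1 :=
    (QuotientGroup.eq_one_iff _).2 (subset_normalClosure (Or.inr (Or.inr rfl)))
  simp only [map_mul, map_inv, map_pow] at h
  exact mul_inv_eq_one.1 h

theorem closure_lamAlpha_lamBeta : closure {lamAlpha n m r, lamBeta n m r} = ⊤ := by
  rw [← PresentedGroup.closure_range_of (metacyclicRels n m r)]
  congr 1
  ext x
  simp [Fin.exists_fin_two, lamAlpha, lamBeta, eq_comm]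

def lamLift {H : Type*} [Group H] (x y : H) (hx : x ^ n = 1) (hy : y ^ m = 1)
    (hyx : y * x * y⁻¹ = x ^ r) : Lam n m r →* H :=
  PresentedGroup.toGroup (f := ![x, y]) (by rintro w (rfl | rfl | rfl) <;> simp [hx, hy, hyx])

theorem exists_lam_hom_units (hn : Even n) (hm : Even m) (hr : Odd r) (x y : ℤˣ) :
    ∃ φ : Lam n m r →* ℤˣ, φ (lamAlpha n m r) = x ∧ φ (lamBeta n m r) = y := by
  have hpow_even {k : ℕ} (hk : Even k) (u : ℤˣ) : u ^ k = 1 := by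
    obtain ⟨j, rfl⟩ := hk
    rw [← two_mul, pow_mul, Int.units_sq, one_pow]
  have hyx : y * x * y⁻¹ = x ^ r := by
    obtain ⟨j, rfl⟩ := hr
    rw [mul_inv_cancel_comm, pow_succ, hpow_even (even_two_mul j), one_mul]
  exact ⟨lamLift x y (hpow_even hn x) (hpow_even hm y) hyx,
    PresentedGroup.toGroup.of _, PresentedGroup.toGroup.of _⟩

end Lam

theorem stmt6_general (n m r : ℕ) (hr : 0 < r) (hg : 2 ∣ Nat.gcd (r - 1) n) (hm2 : 2 ∣ m) :
    {H : Subgroup (Lam n m r) | H.index = 2}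
      = { Subgroup.closure {(lamAlpha n m r) ^ 2, lamBeta n m r},
          Subgroup.closure {lamAlpha n m r, (lamBeta n m r) ^ 2},
          Subgroup.closure {(lamAlpha n m r) ^ 2, lamAlpha n m r * lamBeta n m r} } := by
  have hn : Even n := even_iff_two_dvd.2 (hg.trans (Nat.gcd_dvd_right _ _))
  obtain ⟨t, rfl⟩ : ∃ t, r = 2 * t + 1 := by
    obtain ⟨t, ht⟩ := hg.trans (Nat.gcd_dvd_left _ _)
    exact ⟨t, by omega⟩
  exact setOf_index_eq_two_eq closure_lamAlpha_lamBeta lamBeta_mul_lamAlpha_mul_inv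
    (exists_lam_hom_units hn (even_iff_two_dvd.2 hm2) (odd_two_mul_add_one t))

theorem stmt6 (n m r : ℕ) (hn : 0 < n) (hm : 0 < m) (hr : 0 < r)
    (hrm : r ^ m ≡ 1 [MOD n]) (hg : 2 ∣ Nat.gcd (r - 1) n) (hm2 : 2 ∣ m) :
    {H : Subgroup (Lam n m r) | H.index = 2}
      = { Subgroup.closure {(lamAlpha n m r) ^ 2, lamBeta n m r},
          Subgroup.closure {lamAlpha n m r, (lamBeta n m r) ^ 2},
          Subgroup.closure {(lamAlpha n m r) ^ 2, lamAlpha n m r * lamBeta n m r} } :=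
  stmt6_general n m r hr hg hm2
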